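/- With Z(n) := (1/2)(−Z_n^{(0,0)} + Z_n^{(0,1)} + Z_n^{(1,0)} + Z_n^{(1,1)}) and under the hypothesis that P > 0 on the torus, lim_{n→∞} (1/n²) log Z(n) = m(P). -/

import Mathlib

noncomputable def e (s : ℝ) : ℂ := Complex.exp (2 * Real.pi * Complex.I * s)

def IsRealLaurentPoly (f : ℂ → ℂ → ℂ) : Prop :=
  ∃ c : (ℤ × ℤ) →₀ ℝ, ∀ x y : ℂ, x ≠ 0 → y ≠ 0 →
    f x y = c.sum fun p a => (a : ℂ) * x ^ p.1 * y ^ p.2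

noncomputable def logMahler (f : ℂ → ℂ → ℂ) : ℝ :=
  ∫ s in (0:ℝ)..1, ∫ t in (0:ℝ)..1, Real.log ‖f (e s) (e t)‖

/-- `Z_n^{(a,b)} = ∏_{u^n = (-1)^a} ∏_{v^n = (-1)^b} P(u,v)`. -/
noncomputable def Zab (P : ℂ → ℂ → ℂ) (n : ℕ) (a b : ℕ) : ℂ :=
  ((Polynomial.nthRoots n ((-1 : ℂ) ^ a)).map fun u =>
    ((Polynomial.nthRoots n ((-1 : ℂ) ^ b)).map fun v => P u v).prod).prod

/-- The partition function
`Z(n) = (1/2)(−Z_n^{(0,0)} + Z_n^{(0,1)} + Z_n^{(1,0)} + Z_n^{(1,1)})`. -/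
noncomputable def Ztot (P : ℂ → ℂ → ℂ) (n : ℕ) : ℂ :=
  (1 / 2) * (-(Zab P n 0 0) + Zab P n 0 1 + Zab P n 1 0 + Zab P n 1 1)

open Finset intervalIntegral Real

namespace ZA

lemma e_eq (s : ℝ) : e s = Complex.exp ((2 * Real.pi * s : ℝ) * Complex.I) := by
  unfold e; push_cast; ring_nf

lemma e_ne_zero (s : ℝ) : e s ≠ 0 := Complex.exp_ne_zero _

lemma abs_e (s : ℝ) : ‖e s‖ = 1 := by
  rw [e_eq, Complex.norm_exp]; simp

lemma e_re (s : ℝ) : (e s).re = Real.cos (2 * Real.pi * s) := by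
  rw [e_eq]; exact Complex.exp_ofReal_mul_I_re _

lemma e_add (s t : ℝ) : e (s + t) = e s * e t := by
  unfold e; rw [← Complex.exp_add]; congr 1; push_cast; ring

lemma e_nat_pow (s : ℝ) (n : ℕ) : e s ^ n = e (n * s) := by
  unfold e; rw [← Complex.exp_nat_mul]; congr 1; push_cast; ring

lemma e_zpow (s : ℝ) (m : ℤ) : e s ^ m = e (m * s) := by
  unfold e; rw [← Complex.exp_int_mul]; congr 1; push_cast; ring

lemma e_half_pow (a : ℕ) : e ((a : ℝ) / 2) = (-1 : ℂ) ^ a := by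
  have : ((a : ℝ) / 2) = a * (1/2 : ℝ) := by ring
  rw [this, ← e_nat_pow, ← Complex.exp_pi_mul_I]
  congr 1
  unfold e; push_cast; ring_nf

lemma nthRoots_eq (n a : ℕ) (hn : n ≠ 0) :
    Polynomial.nthRoots n ((-1 : ℂ) ^ a) =
      (Multiset.range n).map (fun j : ℕ => e (((j : ℝ) + (a : ℝ)/2) / n)) := by
  have hζ := Complex.isPrimitiveRoot_exp n hn
  have hα : (e ((a : ℝ) / (2 * n))) ^ n = (-1 : ℂ) ^ a := by
    rw [e_nat_pow, ← e_half_pow]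
    congr 1
    field_simp
  rw [hζ.nthRoots_eq hα]
  apply Multiset.map_congr rfl
  intro j hj
  have h1 : Complex.exp (2 * Real.pi * Complex.I / n) = e (1 / n) := by
    unfold e; push_cast; ring_nf
  rw [h1, e_nat_pow, ← e_add]
  congr 1
  field_simp

/-- `Zab` as a grid product. -/
lemma Zab_eq (P : ℂ → ℂ → ℂ) (n a b : ℕ) (hn : n ≠ 0) :
    Zab P n a b = ∏ j ∈ Finset.range n, ∏ k ∈ Finset.range n,
      P (e (((j : ℝ) + (a : ℝ)/2) / n)) (e (((k : ℝ) + (b : ℝ)/2) / n)) := by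
  unfold Zab
  rw [nthRoots_eq n a hn, nthRoots_eq n b hn, Multiset.map_map]
  rw [Finset.prod_eq_multiset_prod, Finset.range_val]
  apply congrArg Multiset.prod
  apply Multiset.map_congr rfl
  intro j _
  simp only [Function.comp_apply, Multiset.map_map]
  rw [Finset.prod_eq_multiset_prod, Finset.range_val]

/-- The real trigonometric polynomial given by coefficients `c`. -/
noncomputable def Hf (c : (ℤ × ℤ) →₀ ℝ) : ℝ × ℝ → ℝ := fun p =>
  ∑ q ∈ c.support, c q * Real.cos (2 * Real.pi * (q.1 * p.1 + q.2 * p.2))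

lemma P_eq_Hf {P : ℂ → ℂ → ℂ} {c : (ℤ × ℤ) →₀ ℝ}
    (hc : ∀ x y : ℂ, x ≠ 0 → y ≠ 0 →
      P x y = c.sum fun p a => (a : ℂ) * x ^ p.1 * y ^ p.2)
    (him : ∀ s t : ℝ, (P (e s) (e t)).im = 0) (s t : ℝ) :
    P (e s) (e t) = ((Hf c (s, t) : ℝ) : ℂ) := by
  have hre : (P (e s) (e t)).re = Hf c (s, t) := by
    rw [hc (e s) (e t) (e_ne_zero s) (e_ne_zero t)]
    rw [Finsupp.sum, Complex.re_sum, Hf]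
    apply Finset.sum_congr rfl
    intro q _
    rw [e_zpow, e_zpow, mul_assoc, ← e_add]
    rw [e_eq ((q.1 : ℝ) * s + (q.2 : ℝ) * t), Complex.re_ofReal_mul,
      Complex.exp_ofReal_mul_I_re]
  apply Complex.ext
  · simpa using hre
  · simpa using him s t

lemma contDiff_Hf (c : (ℤ × ℤ) →₀ ℝ) (n : ℕ) : ContDiff ℝ (n : ℕ) (Hf c) := by
  unfold Hf
  apply ContDiff.sum
  intro q _
  apply ContDiff.mul contDiff_const
  apply Real.contDiff_cos.comp
  fun_prop

/-- double periodicity -/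
def Per2 (f : ℝ × ℝ → ℝ) : Prop :=
  (∀ s t, f (s + 1, t) = f (s, t)) ∧ (∀ s t, f (s, t + 1) = f (s, t))

lemma per2_Hf (c : (ℤ × ℤ) →₀ ℝ) : Per2 (Hf c) := by
  constructor <;> intro s t <;> unfold Hf <;> apply Finset.sum_congr rfl <;>
    intro q _ <;> congr 1
  · have : 2 * Real.pi * ((q.1 : ℝ) * (s + 1) + (q.2 : ℝ) * t)
        = 2 * Real.pi * ((q.1 : ℝ) * s + (q.2 : ℝ) * t) + (q.1 : ℤ) * (2 * Real.pi) := by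
      push_cast; ring
    rw [this, Real.cos_add_int_mul_two_pi]
  · have : 2 * Real.pi * ((q.1 : ℝ) * s + (q.2 : ℝ) * (t + 1))
        = 2 * Real.pi * ((q.1 : ℝ) * s + (q.2 : ℝ) * t) + (q.2 : ℤ) * (2 * Real.pi) := by
      push_cast; ring
    rw [this, Real.cos_add_int_mul_two_pi]

/-! ### Generic analysis on doubly periodic functions -/

noncomputable def S2 (f : ℝ × ℝ → ℝ) (n : ℕ) (θ τ : ℝ) : ℝ :=
  ∑ j ∈ Finset.range n, ∑ k ∈ Finset.range n, f (((j : ℝ) + θ) / n, ((k : ℝ) + τ) / n)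

noncomputable def I2 (f : ℝ × ℝ → ℝ) : ℝ := ∫ s in (0:ℝ)..1, ∫ t in (0:ℝ)..1, f (s, t)

noncomputable def D1 (f : ℝ × ℝ → ℝ) : ℝ × ℝ → ℝ := fun p => fderiv ℝ f p (1, 0)
noncomputable def D2 (f : ℝ × ℝ → ℝ) : ℝ × ℝ → ℝ := fun p => fderiv ℝ f p (0, 1)

lemma per2_int {f : ℝ × ℝ → ℝ} (hper : Per2 f) (m l : ℤ) (s t : ℝ) :
    f (s + m, t + l) = f (s, t) := by
  have h1 : ∀ t' : ℝ, Function.Periodic (fun s' => f (s', t')) 1 := fun t' s' => hper.1 s' t'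
  have h2 : ∀ s' : ℝ, Function.Periodic (fun t' => f (s', t')) 1 := fun s' t' => hper.2 s' t'
  have e1 : f (s + m, t + l) = f (s, t + l) := by
    have := (h1 (t + l)).sub_int_mul_eq (x := s) (-m)
    simpa using this
  rw [e1]
  have := (h2 s).sub_int_mul_eq (x := t) (-l)
  simpa using this

lemma per2_fract {f : ℝ × ℝ → ℝ} (hper : Per2 f) (s t : ℝ) :
    f (s, t) = f (Int.fract s, Int.fract t) := by
  have : f (Int.fract s, Int.fract t) = f (Int.fract s + ⌊s⌋, Int.fract t + ⌊t⌋) :=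
    (per2_int hper ⌊s⌋ ⌊t⌋ _ _).symm
  rw [this, Int.fract_add_floor, Int.fract_add_floor]

lemma exists_bound {f : ℝ × ℝ → ℝ} (hf : Continuous f) (hper : Per2 f) :
    ∃ M : ℝ, 0 ≤ M ∧ ∀ p, |f p| ≤ M := by
  obtain ⟨C, hC⟩ := (IsCompact.prod (isCompact_Icc (a := (0:ℝ)) (b := 1))
      (isCompact_Icc (a := (0:ℝ)) (b := 1))).exists_bound_of_continuousOn hf.continuousOn
  refine ⟨max C 0, le_max_right _ _, ?_⟩
  rintro ⟨s, t⟩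
  rw [per2_fract hper s t]
  have hm : (Int.fract s, Int.fract t) ∈ Set.Icc (0:ℝ) 1 ×ˢ Set.Icc (0:ℝ) 1 := by
    constructor <;> exact ⟨Int.fract_nonneg _, (Int.fract_lt_one _).le⟩
  calc |f (Int.fract s, Int.fract t)| ≤ C := hC _ hm
    _ ≤ max C 0 := le_max_left _ _

lemma hasDerivAt_D1 {f : ℝ × ℝ → ℝ} (hf : Differentiable ℝ f) (x t : ℝ) :
    HasDerivAt (fun s => f (s, t)) (D1 f (x, t)) x := by
  have h1 : HasDerivAt (fun s : ℝ => (s, t)) ((1:ℝ), (0:ℝ)) x :=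
    (hasDerivAt_id x).prodMk (hasDerivAt_const x t)
  exact (hf (x, t)).hasFDerivAt.comp_hasDerivAt x h1

lemma hasDerivAt_D2 {f : ℝ × ℝ → ℝ} (hf : Differentiable ℝ f) (s x : ℝ) :
    HasDerivAt (fun t => f (s, t)) (D2 f (s, x)) x := by
  have h1 : HasDerivAt (fun t : ℝ => (s, t)) ((0:ℝ), (1:ℝ)) x :=
    (hasDerivAt_const x s).prodMk (hasDerivAt_id x)
  exact (hf (s, x)).hasFDerivAt.comp_hasDerivAt x h1

lemma contDiff_D1 {f : ℝ × ℝ → ℝ} {m : ℕ} (hf : ContDiff ℝ ((m+1 : ℕ)) f) :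
    ContDiff ℝ (m : ℕ) (D1 f) := by
  have h : ContDiff ℝ (m : ℕ) (fderiv ℝ f) := hf.fderiv_right (by exact_mod_cast le_refl _)
  exact h.clm_apply contDiff_const

lemma contDiff_D2 {f : ℝ × ℝ → ℝ} {m : ℕ} (hf : ContDiff ℝ ((m+1 : ℕ)) f) :
    ContDiff ℝ (m : ℕ) (D2 f) := by
  have h : ContDiff ℝ (m : ℕ) (fderiv ℝ f) := hf.fderiv_right (by exact_mod_cast le_refl _)
  exact h.clm_apply contDiff_const

lemma per2_D1 {f : ℝ × ℝ → ℝ} (hf : Differentiable ℝ f) (hper : Per2 f) : Per2 (D1 f) := by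
  have hD : ∀ x t : ℝ, D1 f (x, t) = deriv (fun s => f (s, t)) x :=
    fun x t => ((hasDerivAt_D1 hf x t).deriv).symm
  constructor
  · intro s t
    rw [hD, hD]
    have h1 : (fun x => f (x, t)) = fun x => f (x + 1, t) := funext fun x => (hper.1 x t).symm
    conv_lhs => rw [← deriv_comp_add_const (fun x => f (x, t)) 1 s]
    congr 1
    exact h1.symm
  · intro s t
    rw [hD, hD]
    congr 1
    exact funext fun x => hper.2 x t

lemma per2_D2 {f : ℝ × ℝ → ℝ} (hf : Differentiable ℝ f) (hper : Per2 f) : Per2 (D2 f) := by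
  have hD : ∀ s x : ℝ, D2 f (s, x) = deriv (fun t => f (s, t)) x :=
    fun s x => ((hasDerivAt_D2 hf s x).deriv).symm
  constructor
  · intro s t
    rw [hD, hD]
    congr 1
    exact funext fun x => hper.1 s x
  · intro s t
    rw [hD, hD]
    conv_lhs => rw [← deriv_comp_add_const (fun x => f (s, x)) 1 t]
    congr 1
    exact funext fun x => (hper.2 s x)

lemma S2_abs_le {f : ℝ × ℝ → ℝ} {M : ℝ} (hM : ∀ p, |f p| ≤ M) (n : ℕ) (θ τ : ℝ) :
    |S2 f n θ τ| ≤ (n : ℝ)^2 * M := by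
  calc |S2 f n θ τ| ≤ ∑ j ∈ Finset.range n, |∑ k ∈ Finset.range n,
        f (((j : ℝ) + θ) / n, ((k : ℝ) + τ) / n)| := Finset.abs_sum_le_sum_abs _ _
    _ ≤ ∑ j ∈ Finset.range n, ∑ k ∈ Finset.range n, |f (((j : ℝ) + θ) / n, ((k : ℝ) + τ) / n)| :=
        Finset.sum_le_sum fun j _ => Finset.abs_sum_le_sum_abs _ _
    _ ≤ ∑ _j ∈ Finset.range n, ∑ _k ∈ Finset.range n, M :=
        Finset.sum_le_sum fun j _ => Finset.sum_le_sum fun k _ => hM _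
    _ = (n : ℝ)^2 * M := by simp [Finset.sum_const]; ring

lemma I2_abs_le {f : ℝ × ℝ → ℝ} {M : ℝ} (hM : ∀ p, |f p| ≤ M) : |I2 f| ≤ M := by
  have h1 : ∀ s : ℝ, |∫ t in (0:ℝ)..1, f (s, t)| ≤ M := by
    intro s
    have := intervalIntegral.norm_integral_le_of_norm_le_const
      (C := M) (f := fun t => f (s, t)) (a := 0) (b := 1) (fun x _ => by
        rw [Real.norm_eq_abs]; exact hM _)
    simpa using this
  have := intervalIntegral.norm_integral_le_of_norm_le_const
    (C := M) (f := fun s => ∫ t in (0:ℝ)..1, f (s, t)) (a := 0) (b := 1) (fun x _ => by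
      rw [Real.norm_eq_abs]; exact h1 _)
  simpa [I2] using this

lemma sum_shift_integral {g : ℝ → ℝ} (hg : Continuous g) (n : ℕ) (hn : n ≠ 0) :
    (∫ u in (0:ℝ)..1, ∑ j ∈ Finset.range n, g (((j : ℝ) + u) / n))
      = n * ∫ x in (0:ℝ)..1, g x := by
  have hnR : (n : ℝ) ≠ 0 := Nat.cast_ne_zero.mpr hn
  have hswap := intervalIntegral.integral_finset_sum (μ := MeasureTheory.volume)
    (a := (0:ℝ)) (b := 1) (s := Finset.range n)
    (f := fun (j : ℕ) (u : ℝ) => g (((j : ℝ) + u) / n))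
    (fun j _ => Continuous.intervalIntegrable (hg.comp (by fun_prop)) _ _)
  rw [hswap]
  have key : ∀ j : ℕ, (∫ u in (0:ℝ)..1, g (((j : ℝ) + u) / n))
      = (n : ℝ) * ∫ x in ((j:ℝ)/n)..(((j:ℝ)+1)/n), g x := by
    intro j
    have h1 : (fun u : ℝ => g (((j : ℝ) + u) / n)) = fun u : ℝ => g (u / n + (j : ℝ)/n) := by
      funext u; congr 1; field_simp; ring
    have e1 : (0:ℝ)/(n:ℝ) + (j:ℝ)/n = (j:ℝ)/n := by rw [zero_div, zero_add]
    have e2 : (1:ℝ)/(n:ℝ) + (j:ℝ)/n = ((j:ℝ)+1)/n := by rw [← add_div, add_comm]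
    rw [show (∫ u in (0:ℝ)..1, g (((j : ℝ) + u) / n))
        = ∫ u in (0:ℝ)..1, g (u / n + (j : ℝ)/n) from by rw [h1]]
    rw [intervalIntegral.integral_comp_div_add g hnR ((j:ℝ)/n), e1, e2, smul_eq_mul]
  have h3 := intervalIntegral.sum_integral_adjacent_intervals (μ := MeasureTheory.volume)
    (a := fun k : ℕ => (k:ℝ)/n) (n := n) (fun k _ => hg.intervalIntegrable _ _)
  have h3' : ∑ j ∈ Finset.range n, ∫ x in ((j:ℝ)/n)..(((j:ℝ)+1)/n), g x
      = ∫ x in (0:ℝ)..1, g x := by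
    rw [show ∑ j ∈ Finset.range n, (∫ x in ((j:ℝ)/n)..(((j:ℝ)+1)/n), g x)
        = ∑ j ∈ Finset.range n, ∫ x in ((j:ℝ)/n)..((((j+1):ℕ):ℝ)/n), g x from
      Finset.sum_congr rfl fun j _ => by push_cast; ring_nf]
    rw [h3]
    norm_num [div_self hnR]
  rw [Finset.sum_congr rfl fun j _ => key j, ← Finset.mul_sum, h3']

lemma cont_S2_snd {f : ℝ × ℝ → ℝ} (hf : Continuous f) (n : ℕ) (u : ℝ) :
    Continuous (fun v => S2 f n u v) := by
  apply continuous_finset_sum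
  intro j _
  apply continuous_finset_sum
  intro k _
  exact hf.comp (by fun_prop)

lemma integral_S2 {f : ℝ × ℝ → ℝ} (hf : Continuous f) (n : ℕ) (hn : n ≠ 0) :
    (∫ u in (0:ℝ)..1, ∫ v in (0:ℝ)..1, S2 f n u v) = (n:ℝ)^2 * I2 f := by
  have hΨ : Continuous (fun s : ℝ => ∫ t in (0:ℝ)..1, f (s, t)) := by
    apply intervalIntegral.continuous_parametric_intervalIntegral_of_continuous'
      (f := fun s t => f (s, t))
    exact hf.comp (by fun_prop)
  have hinner : ∀ u : ℝ, (∫ v in (0:ℝ)..1, S2 f n u v)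
      = (n:ℝ) * ∑ j ∈ Finset.range n, (fun s => ∫ t in (0:ℝ)..1, f (s, t)) (((j:ℝ) + u)/n) := by
    intro u
    unfold S2
    have hswap := intervalIntegral.integral_finset_sum (μ := MeasureTheory.volume)
      (a := (0:ℝ)) (b := 1) (s := Finset.range n)
      (f := fun (j : ℕ) (v : ℝ) => ∑ k ∈ Finset.range n, f (((j:ℝ) + u) / n, ((k:ℝ) + v) / n))
      (fun j _ => Continuous.intervalIntegrable
        (continuous_finset_sum _ fun k _ => hf.comp (by fun_prop)) _ _)
    rw [hswap, Finset.mul_sum]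
    refine Finset.sum_congr rfl fun j _ => ?_
    exact sum_shift_integral (g := fun t => f (((j:ℝ) + u)/n, t)) (hf.comp (by fun_prop)) n hn
  rw [intervalIntegral.integral_congr (g := fun u => (n:ℝ) *
      ∑ j ∈ Finset.range n, (fun s => ∫ t in (0:ℝ)..1, f (s, t)) (((j:ℝ) + u)/n))
      (fun u _ => hinner u)]
  rw [intervalIntegral.integral_const_mul]
  rw [sum_shift_integral (g := fun s => ∫ t in (0:ℝ)..1, f (s, t)) hΨ n hn]
  rw [I2]; ring

lemma S2_hasDerivAt_fst {f : ℝ × ℝ → ℝ} (hf : Differentiable ℝ f) {n : ℕ} (hn : n ≠ 0)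
    (θ τ : ℝ) : HasDerivAt (fun x => S2 f n x τ) (S2 (D1 f) n θ τ / n) θ := by
  have hnR : (n : ℝ) ≠ 0 := Nat.cast_ne_zero.mpr hn
  have hterm : ∀ j k : ℕ, HasDerivAt (fun x : ℝ => f (((j:ℝ) + x)/n, ((k:ℝ) + τ)/n))
      (D1 f (((j:ℝ) + θ)/n, ((k:ℝ) + τ)/n) * (1/n)) θ := by
    intro j k
    have hγ : HasDerivAt (fun x : ℝ => ((j:ℝ) + x)/n) (1/n) θ := by
      simpa using (((hasDerivAt_id θ).const_add (j:ℝ)).div_const (n:ℝ))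
    exact (hasDerivAt_D1 hf (((j:ℝ) + θ)/n) (((k:ℝ) + τ)/n)).comp θ hγ
  have H : HasDerivAt (fun x => S2 f n x τ)
      (∑ j ∈ Finset.range n, ∑ k ∈ Finset.range n,
        D1 f (((j:ℝ) + θ)/n, ((k:ℝ) + τ)/n) * (1/n)) θ := by
    apply HasDerivAt.fun_sum
    intro j _
    apply HasDerivAt.fun_sum
    intro k _
    exact hterm j k
  convert H using 1
  unfold S2
  rw [Finset.sum_div]
  refine Finset.sum_congr rfl fun j _ => ?_
  rw [Finset.sum_div]
  refine Finset.sum_congr rfl fun k _ => ?_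
  rw [mul_one_div]

lemma S2_hasDerivAt_snd {f : ℝ × ℝ → ℝ} (hf : Differentiable ℝ f) {n : ℕ} (hn : n ≠ 0)
    (θ τ : ℝ) : HasDerivAt (fun y => S2 f n θ y) (S2 (D2 f) n θ τ / n) τ := by
  have hterm : ∀ j k : ℕ, HasDerivAt (fun y : ℝ => f (((j:ℝ) + θ)/n, ((k:ℝ) + y)/n))
      (D2 f (((j:ℝ) + θ)/n, ((k:ℝ) + τ)/n) * (1/n)) τ := by
    intro j k
    have hγ : HasDerivAt (fun y : ℝ => ((k:ℝ) + y)/n) (1/n) τ := by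
      simpa using (((hasDerivAt_id τ).const_add (k:ℝ)).div_const (n:ℝ))
    exact (hasDerivAt_D2 hf (((j:ℝ) + θ)/n) (((k:ℝ) + τ)/n)).comp τ hγ
  have H : HasDerivAt (fun y => S2 f n θ y)
      (∑ j ∈ Finset.range n, ∑ k ∈ Finset.range n,
        D2 f (((j:ℝ) + θ)/n, ((k:ℝ) + τ)/n) * (1/n)) τ := by
    apply HasDerivAt.fun_sum
    intro j _
    apply HasDerivAt.fun_sum
    intro k _
    exact hterm j k
  convert H using 1
  unfold S2
  rw [Finset.sum_div]
  refine Finset.sum_congr rfl fun j _ => ?_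
  rw [Finset.sum_div]
  refine Finset.sum_congr rfl fun k _ => ?_
  rw [mul_one_div]

lemma key_step {f : ℝ × ℝ → ℝ} (hf : Continuous f) (hd : Differentiable ℝ f)
    {n : ℕ} (hn : n ≠ 0) {E1 E2 : ℝ}
    (hE1 : ∀ θ τ, θ ∈ Set.Icc (0:ℝ) 1 → τ ∈ Set.Icc (0:ℝ) 1 → |S2 (D1 f) n θ τ| ≤ E1)
    (hE2 : ∀ θ τ, θ ∈ Set.Icc (0:ℝ) 1 → τ ∈ Set.Icc (0:ℝ) 1 → |S2 (D2 f) n θ τ| ≤ E2)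
    {θ τ : ℝ} (hθ : θ ∈ Set.Icc (0:ℝ) 1) (hτ : τ ∈ Set.Icc (0:ℝ) 1) :
    |S2 f n θ τ - (n:ℝ)^2 * I2 f| ≤ (E1 + E2) / n := by
  have hnR : (0:ℝ) < n := by positivity
  have habs1 : ∀ x y : ℝ, x ∈ Set.Icc (0:ℝ) 1 → y ∈ Set.Icc (0:ℝ) 1 → |x - y| ≤ 1 := by
    intro x y hx hy
    rw [abs_sub_le_iff]
    constructor <;> linarith [hx.1, hx.2, hy.1, hy.2]
  have hdiff : ∀ u v, u ∈ Set.Icc (0:ℝ) 1 → v ∈ Set.Icc (0:ℝ) 1 →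
      |S2 f n θ τ - S2 f n u v| ≤ (E1 + E2) / n := by
    intro u v hu hv
    have hda : 0 ≤ E1 := le_trans (abs_nonneg _) (hE1 θ τ hθ hτ)
    have hdb : 0 ≤ E2 := le_trans (abs_nonneg _) (hE2 θ τ hθ hτ)
    have h1 : |S2 f n θ τ - S2 f n u τ| ≤ E1 / n := by
      have hmvt := Convex.norm_image_sub_le_of_norm_hasDerivWithin_le
        (f := fun x => S2 f n x τ) (f' := fun x => S2 (D1 f) n x τ / n)
        (s := Set.Icc (0:ℝ) 1) (C := E1 / n)
        (fun x _ => (S2_hasDerivAt_fst hd hn x τ).hasDerivWithinAt)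
        (fun x hx => by
          rw [Real.norm_eq_abs, abs_div, abs_of_pos hnR]
          exact (div_le_div_iff_of_pos_right hnR).mpr (hE1 x τ hx hτ))
        (convex_Icc 0 1) hu hθ
      rw [Real.norm_eq_abs, Real.norm_eq_abs] at hmvt
      calc |S2 f n θ τ - S2 f n u τ| ≤ E1 / n * |θ - u| := hmvt
        _ ≤ E1 / n * 1 := by
            exact mul_le_mul_of_nonneg_left (habs1 θ u hθ hu) (div_nonneg hda hnR.le)
        _ = E1 / n := mul_one _
    have h2 : |S2 f n u τ - S2 f n u v| ≤ E2 / n := by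
      have hmvt := Convex.norm_image_sub_le_of_norm_hasDerivWithin_le
        (f := fun y => S2 f n u y) (f' := fun y => S2 (D2 f) n u y / n)
        (s := Set.Icc (0:ℝ) 1) (C := E2 / n)
        (fun y _ => (S2_hasDerivAt_snd hd hn u y).hasDerivWithinAt)
        (fun y hy => by
          rw [Real.norm_eq_abs, abs_div, abs_of_pos hnR]
          exact (div_le_div_iff_of_pos_right hnR).mpr (hE2 u y hu hy))
        (convex_Icc 0 1) hv hτ
      rw [Real.norm_eq_abs, Real.norm_eq_abs] at hmvt
      calc |S2 f n u τ - S2 f n u v| ≤ E2 / n * |τ - v| := hmvt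
        _ ≤ E2 / n * 1 := by
            exact mul_le_mul_of_nonneg_left (habs1 τ v hτ hv) (div_nonneg hdb hnR.le)
        _ = E2 / n := mul_one _
    calc |S2 f n θ τ - S2 f n u v|
        ≤ |S2 f n θ τ - S2 f n u τ| + |S2 f n u τ - S2 f n u v| := abs_sub_le _ _ _
      _ ≤ E1 / n + E2 / n := add_le_add h1 h2
      _ = (E1 + E2) / n := (add_div _ _ _).symm
  have hcont_v : ∀ u, Continuous fun v => S2 f n u v := cont_S2_snd hf n
  have hW : Continuous (fun u => ∫ v in (0:ℝ)..1, S2 f n u v) := by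
    apply intervalIntegral.continuous_parametric_intervalIntegral_of_continuous'
      (f := fun u v => S2 f n u v)
    have : Function.uncurry (fun u v => S2 f n u v) = fun p : ℝ × ℝ => S2 f n p.1 p.2 := rfl
    rw [this]
    unfold S2
    apply continuous_finset_sum
    intro j _
    apply continuous_finset_sum
    intro k _
    exact hf.comp (by fun_prop)
  have hid : S2 f n θ τ - (n:ℝ)^2 * I2 f
      = ∫ u in (0:ℝ)..1, ∫ v in (0:ℝ)..1, (S2 f n θ τ - S2 f n u v) := by
    have h1 : ∀ u : ℝ, (∫ v in (0:ℝ)..1, (S2 f n θ τ - S2 f n u v))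
        = S2 f n θ τ - ∫ v in (0:ℝ)..1, S2 f n u v := by
      intro u
      rw [intervalIntegral.integral_sub intervalIntegrable_const
        (((hcont_v u)).intervalIntegrable _ _)]
      simp
    rw [intervalIntegral.integral_congr
      (g := fun u => S2 f n θ τ - ∫ v in (0:ℝ)..1, S2 f n u v) (fun u _ => h1 u)]
    rw [intervalIntegral.integral_sub intervalIntegrable_const (hW.intervalIntegrable _ _)]
    rw [integral_S2 hf n hn]
    simp
  rw [hid]
  have hIcc : Set.uIoc (0:ℝ) 1 ⊆ Set.Icc (0:ℝ) 1 := by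
    rw [Set.uIoc_of_le (by norm_num : (0:ℝ) ≤ 1)]
    exact fun x hx => ⟨hx.1.le, hx.2⟩
  have hb : ∀ u ∈ Set.uIoc (0:ℝ) 1,
      ‖∫ v in (0:ℝ)..1, (S2 f n θ τ - S2 f n u v)‖ ≤ (E1 + E2) / n := by
    intro u hu
    have := intervalIntegral.norm_integral_le_of_norm_le_const (C := (E1 + E2)/n)
      (f := fun v => S2 f n θ τ - S2 f n u v) (a := 0) (b := 1) (fun v hv => by
        rw [Real.norm_eq_abs]; exact hdiff u v (hIcc hu) (hIcc hv))
    simpa using this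
  have := intervalIntegral.norm_integral_le_of_norm_le_const (C := (E1 + E2)/n)
    (f := fun u => ∫ v in (0:ℝ)..1, (S2 f n θ τ - S2 f n u v)) (a := 0) (b := 1) hb
  simpa using this

lemma I2_swap {f : ℝ × ℝ → ℝ} (hf : Continuous f) :
    I2 f = ∫ t in (0:ℝ)..1, ∫ s in (0:ℝ)..1, f (s, t) := by
  have h01 : (0:ℝ) ≤ 1 := by norm_num
  have hint : MeasureTheory.Integrable (Function.uncurry fun s t => f (s, t))
      ((MeasureTheory.volume.restrict (Set.Ioc (0:ℝ) 1)).prod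
        (MeasureTheory.volume.restrict (Set.Ioc (0:ℝ) 1))) := by
    rw [MeasureTheory.Measure.prod_restrict]
    have hsub : Set.Ioc (0:ℝ) 1 ×ˢ Set.Ioc (0:ℝ) 1 ⊆ Set.Icc (0:ℝ) 1 ×ˢ Set.Icc (0:ℝ) 1 :=
      Set.prod_mono Set.Ioc_subset_Icc_self Set.Ioc_subset_Icc_self
    have hic : MeasureTheory.IntegrableOn (Function.uncurry fun s t => f (s, t))
        (Set.Icc (0:ℝ) 1 ×ˢ Set.Icc (0:ℝ) 1)
        (MeasureTheory.volume.prod MeasureTheory.volume) := by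
      rw [← MeasureTheory.Measure.volume_eq_prod]
      exact hf.continuousOn.integrableOn_compact ((isCompact_Icc).prod isCompact_Icc)
    rw [← MeasureTheory.Measure.volume_eq_prod]
    exact hic.mono_set hsub
  have hswap := MeasureTheory.integral_integral_swap hint
  rw [I2]
  rw [intervalIntegral.integral_of_le h01, intervalIntegral.integral_of_le h01]
  have hl : ∀ s : ℝ, (∫ t in (0:ℝ)..1, f (s, t)) = ∫ t in Set.Ioc (0:ℝ) 1, f (s, t) :=
    fun s => intervalIntegral.integral_of_le h01
  have hr : ∀ t : ℝ, (∫ s in (0:ℝ)..1, f (s, t)) = ∫ s in Set.Ioc (0:ℝ) 1, f (s, t) :=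
    fun t => intervalIntegral.integral_of_le h01
  simp only [hl, hr]
  exact hswap

lemma I2_D1_eq_zero {f : ℝ × ℝ → ℝ} (hf : ContDiff ℝ (1:ℕ) f) (hper : Per2 f) :
    I2 (D1 f) = 0 := by
  have hd : Differentiable ℝ f := hf.differentiable (by simp)
  have hD1c : Continuous (D1 f) := (contDiff_D1 (m := 0) (by exact_mod_cast hf)).continuous
  rw [I2_swap hD1c]
  have hin : ∀ t : ℝ, (∫ s in (0:ℝ)..1, D1 f (s, t)) = 0 := by
    intro t
    have := intervalIntegral.integral_eq_sub_of_hasDerivAt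
      (f := fun s => f (s, t)) (f' := fun s => D1 f (s, t)) (a := 0) (b := 1)
      (fun s _ => hasDerivAt_D1 hd s t)
      ((hD1c.comp (by fun_prop)).intervalIntegrable _ _)
    rw [this]
    have h0 := hper.1 0 t
    rw [zero_add] at h0
    show f (1, t) - f (0, t) = 0
    rw [h0, sub_self]
  rw [intervalIntegral.integral_congr (g := fun _ => (0:ℝ)) (fun t _ => hin t)]
  simp

lemma I2_D2_eq_zero {f : ℝ × ℝ → ℝ} (hf : ContDiff ℝ (1:ℕ) f) (hper : Per2 f) :
    I2 (D2 f) = 0 := by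
  have hd : Differentiable ℝ f := hf.differentiable (by simp)
  have hD2c : Continuous (D2 f) := (contDiff_D2 (m := 0) (by exact_mod_cast hf)).continuous
  have hin : ∀ s : ℝ, (∫ t in (0:ℝ)..1, D2 f (s, t)) = 0 := by
    intro s
    have := intervalIntegral.integral_eq_sub_of_hasDerivAt
      (f := fun t => f (s, t)) (f' := fun t => D2 f (s, t)) (a := 0) (b := 1)
      (fun t _ => hasDerivAt_D2 hd s t)
      ((hD2c.comp (by fun_prop)).intervalIntegrable _ _)
    rw [this]
    have h0 := hper.2 s 0
    rw [zero_add] at h0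
    show f (s, 1) - f (s, 0) = 0
    rw [h0, sub_self]
  rw [I2]
  rw [intervalIntegral.integral_congr (g := fun _ => (0:ℝ)) (fun s _ => hin s)]
  simp

/-- The key estimate, by induction on the number of derivatives used. -/
lemma key_ind : ∀ (m : ℕ) (f : ℝ × ℝ → ℝ), ContDiff ℝ (m:ℕ) f → Per2 f →
    ∃ C : ℝ, 0 ≤ C ∧ ∀ n : ℕ, n ≠ 0 → ∀ θ τ, θ ∈ Set.Icc (0:ℝ) 1 → τ ∈ Set.Icc (0:ℝ) 1 →
      |S2 f n θ τ - (n:ℝ)^2 * I2 f| ≤ C * (n:ℝ)^2 / (n:ℝ)^m := by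
  intro m
  induction m with
  | zero =>
    intro f hf hper
    obtain ⟨M, hM0, hM⟩ := exists_bound hf.continuous hper
    refine ⟨2 * M, by positivity, ?_⟩
    intro n hn θ τ hθ hτ
    have h1 : |S2 f n θ τ| ≤ (n:ℝ)^2 * M := S2_abs_le hM n θ τ
    have h2 : |(n:ℝ)^2 * I2 f| ≤ (n:ℝ)^2 * M := by
      rw [abs_mul, abs_of_nonneg (by positivity : (0:ℝ) ≤ (n:ℝ)^2)]
      exact mul_le_mul_of_nonneg_left (I2_abs_le hM) (by positivity)
    calc |S2 f n θ τ - (n:ℝ)^2 * I2 f| ≤ |S2 f n θ τ| + |(n:ℝ)^2 * I2 f| := abs_sub _ _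
      _ ≤ (n:ℝ)^2 * M + (n:ℝ)^2 * M := add_le_add h1 h2
      _ = 2 * M * (n:ℝ)^2 / (n:ℝ)^0 := by ring
  | succ m ih =>
    intro f hf hper
    have hone : ContDiff ℝ (1:ℕ) f := hf.of_le (by exact_mod_cast Nat.one_le_iff_ne_zero.mpr (Nat.succ_ne_zero m))
    have hd : Differentiable ℝ f :=
      hone.differentiable (by simp)
    have hD1 : ContDiff ℝ (m:ℕ) (D1 f) := contDiff_D1 hf
    have hD2 : ContDiff ℝ (m:ℕ) (D2 f) := contDiff_D2 hf
    obtain ⟨C1, hC10, hC1⟩ := ih (D1 f) hD1 (per2_D1 hd hper)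
    obtain ⟨C2, hC20, hC2⟩ := ih (D2 f) hD2 (per2_D2 hd hper)
    refine ⟨C1 + C2, by positivity, ?_⟩
    intro n hn θ τ hθ hτ
    have hnR : (0:ℝ) < n := by positivity
    have hI1 : I2 (D1 f) = 0 := I2_D1_eq_zero hone hper
    have hI2 : I2 (D2 f) = 0 := I2_D2_eq_zero hone hper
    have hE1 : ∀ θ' τ', θ' ∈ Set.Icc (0:ℝ) 1 → τ' ∈ Set.Icc (0:ℝ) 1 →
        |S2 (D1 f) n θ' τ'| ≤ C1 * (n:ℝ)^2 / (n:ℝ)^m := by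
      intro θ' τ' h1 h2
      have := hC1 n hn θ' τ' h1 h2
      rwa [hI1, mul_zero, sub_zero] at this
    have hE2 : ∀ θ' τ', θ' ∈ Set.Icc (0:ℝ) 1 → τ' ∈ Set.Icc (0:ℝ) 1 →
        |S2 (D2 f) n θ' τ'| ≤ C2 * (n:ℝ)^2 / (n:ℝ)^m := by
      intro θ' τ' h1 h2
      have := hC2 n hn θ' τ' h1 h2
      rwa [hI2, mul_zero, sub_zero] at this
    have := key_step hf.continuous hd hn hE1 hE2 hθ hτ
    calc |S2 f n θ τ - (n:ℝ)^2 * I2 f|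
        ≤ (C1 * (n:ℝ)^2 / (n:ℝ)^m + C2 * (n:ℝ)^2 / (n:ℝ)^m) / n := this
      _ = (C1 + C2) * (n:ℝ)^2 / (n:ℝ)^(m+1) := by
          field_simp
          ring

lemma Zab_exp {P : ℂ → ℂ → ℂ} {c : (ℤ × ℤ) →₀ ℝ}
    (hc : ∀ x y : ℂ, x ≠ 0 → y ≠ 0 →
      P x y = c.sum fun p a => (a : ℂ) * x ^ p.1 * y ^ p.2)
    (him : ∀ s t : ℝ, (P (e s) (e t)).im = 0)
    (hHpos : ∀ p : ℝ × ℝ, 0 < Hf c p)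
    (n : ℕ) (hn : n ≠ 0) (a b : ℕ) :
    Zab P n a b =
      ((Real.exp (S2 (fun p => Real.log (Hf c p)) n ((a:ℝ)/2) ((b:ℝ)/2)) : ℝ) : ℂ) := by
  rw [Zab_eq P n a b hn]
  have h1 : ∀ j k : ℕ, P (e (((j : ℝ) + (a : ℝ)/2) / n)) (e (((k : ℝ) + (b : ℝ)/2) / n))
      = ((Real.exp (Real.log (Hf c ((((j : ℝ) + (a : ℝ)/2) / n), (((k : ℝ) + (b : ℝ)/2) / n)))) : ℝ) : ℂ) := by
    intro j k
    rw [P_eq_Hf hc him, Real.exp_log (hHpos _)]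
  calc (∏ j ∈ Finset.range n, ∏ k ∈ Finset.range n,
        P (e (((j : ℝ) + (a : ℝ)/2) / n)) (e (((k : ℝ) + (b : ℝ)/2) / n)))
      = ∏ j ∈ Finset.range n, ∏ k ∈ Finset.range n,
        ((Real.exp (Real.log (Hf c ((((j : ℝ) + (a : ℝ)/2) / n), (((k : ℝ) + (b : ℝ)/2) / n)))) : ℝ) : ℂ) :=
        Finset.prod_congr rfl fun j _ => Finset.prod_congr rfl fun k _ => h1 j k
    _ = (((∏ j ∈ Finset.range n, ∏ k ∈ Finset.range n,
        Real.exp (Real.log (Hf c ((((j : ℝ) + (a : ℝ)/2) / n), (((k : ℝ) + (b : ℝ)/2) / n))))) : ℝ) : ℂ) := by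
        rw [Complex.ofReal_prod]
        exact Finset.prod_congr rfl fun j _ => (Complex.ofReal_prod _ _).symm
    _ = ((Real.exp (S2 (fun p => Real.log (Hf c p)) n ((a:ℝ)/2) ((b:ℝ)/2)) : ℝ) : ℂ) := by
        norm_cast
        rw [S2, Real.exp_sum]
        exact Finset.prod_congr rfl fun j _ => (Real.exp_sum _ _).symm

theorem Ztot_growth' (P : ℂ → ℂ → ℂ) (hP : IsRealLaurentPoly P)
    (hpos : ∀ x y : ℂ, ‖x‖ = 1 → ‖y‖ = 1 →
      0 < (P x y).re ∧ (P x y).im = 0) :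
    (∀ᶠ n : ℕ in Filter.atTop, 0 < (Ztot P n).re) ∧
      Filter.Tendsto (fun n : ℕ => (1 / (n : ℝ) ^ 2) * Real.log ((Ztot P n).re))
        Filter.atTop (nhds (logMahler P)) := by
  classical
  obtain ⟨c, hc⟩ := hP
  have him : ∀ s t : ℝ, (P (e s) (e t)).im = 0 := fun s t => (hpos _ _ (abs_e s) (abs_e t)).2
  have hHpos : ∀ p : ℝ × ℝ, 0 < Hf c p := by
    rintro ⟨s, t⟩
    have h := (hpos _ _ (abs_e s) (abs_e t)).1
    rw [P_eq_Hf hc him s t] at h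
    simpa using h
  set G : ℝ × ℝ → ℝ := fun p => Real.log (Hf c p) with hGdef
  have hGc : ContDiff ℝ ((3:ℕ) : ℕ) G := (contDiff_Hf c 3).log fun p => (hHpos p).ne'
  have hGper : Per2 G := by
    constructor
    · intro s t; simp only [hGdef]; rw [(per2_Hf c).1]
    · intro s t; simp only [hGdef]; rw [(per2_Hf c).2]
  obtain ⟨C, hC0, hkey⟩ := key_ind 3 G hGc hGper
  set I : ℝ := I2 G with hIdef
  have hlogM : logMahler P = I := by
    rw [logMahler, hIdef, I2]
    congr 1
    funext s
    congr 1
    funext t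
    rw [P_eq_Hf hc him s t, Complex.norm_real, Real.norm_eq_abs, abs_of_pos (hHpos (s, t))]
  -- the four shifted sums
  set d : ℕ → ℕ → ℕ → ℝ := fun n a b => S2 G n ((a:ℝ)/2) ((b:ℝ)/2) - (n:ℝ)^2 * I with hddef
  have hdbound : ∀ (n : ℕ), n ≠ 0 → ∀ a b : ℕ, a ≤ 1 → b ≤ 1 → |d n a b| ≤ C / n := by
    intro n hn a b ha hb
    have hnR : (0:ℝ) < n := by positivity
    have hmem : ∀ a : ℕ, a ≤ 1 → ((a:ℝ)/2) ∈ Set.Icc (0:ℝ) 1 := by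
      intro a ha
      have : (a:ℝ) ≤ 1 := by exact_mod_cast ha
      constructor <;> [positivity; linarith]
    have := hkey n hn ((a:ℝ)/2) ((b:ℝ)/2) (hmem a ha) (hmem b hb)
    calc |d n a b| ≤ C * (n:ℝ)^2 / (n:ℝ)^3 := this
      _ = C / n := by field_simp
  set A : ℕ → ℝ := fun n => -Real.exp (d n 0 0) + Real.exp (d n 0 1)
      + Real.exp (d n 1 0) + Real.exp (d n 1 1) with hAdef
  have hZre : ∀ n : ℕ, n ≠ 0 → (Ztot P n).re = (1/2) * Real.exp ((n:ℝ)^2 * I) * A n := by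
    intro n hn
    have hs : ∀ a b : ℕ, S2 G n ((a:ℝ)/2) ((b:ℝ)/2) = (n:ℝ)^2 * I + d n a b := by
      intro a b; simp only [hddef]; ring
    have : Ztot P n = (((1/2) * Real.exp ((n:ℝ)^2 * I) * A n : ℝ) : ℂ) := by
      rw [Ztot, Zab_exp hc him hHpos n hn 0 0, Zab_exp hc him hHpos n hn 0 1,
        Zab_exp hc him hHpos n hn 1 0, Zab_exp hc him hHpos n hn 1 1]
      rw [hs 0 0, hs 0 1, hs 1 0, hs 1 1]
      rw [Real.exp_add, Real.exp_add, Real.exp_add, Real.exp_add]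
      simp only [hAdef]
      push_cast
      ring
    rw [this, Complex.ofReal_re]
  -- limits
  have hdten : ∀ a b : ℕ, a ≤ 1 → b ≤ 1 →
      Filter.Tendsto (fun n => d n a b) Filter.atTop (nhds 0) := by
    intro a b ha hb
    apply squeeze_zero_norm' (a := fun n : ℕ => C / n)
    · filter_upwards [Filter.eventually_ge_atTop 1] with n hn
      exact hdbound n (by omega) a b ha hb
    · exact tendsto_const_div_atTop_nhds_zero_nat C
  have hexp : ∀ a b : ℕ, a ≤ 1 → b ≤ 1 →
      Filter.Tendsto (fun n => Real.exp (d n a b)) Filter.atTop (nhds 1) := by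
    intro a b ha hb
    have := (Real.continuous_exp.tendsto 0).comp (hdten a b ha hb)
    simpa [Function.comp_def] using this
  have hA : Filter.Tendsto A Filter.atTop (nhds 2) := by
    have h2 : (2:ℝ) = -1 + 1 + 1 + 1 := by norm_num
    rw [h2]
    exact (((((hexp 0 0 (by norm_num) (by norm_num)).neg.add
      (hexp 0 1 (by norm_num) (by norm_num))).add
      (hexp 1 0 (by norm_num) (by norm_num))).add
      (hexp 1 1 (by norm_num) (by norm_num))))
  have hApos : ∀ᶠ n : ℕ in Filter.atTop, 1 < A n := hA.eventually_const_lt (by norm_num)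
  have hev : ∀ᶠ n : ℕ in Filter.atTop, 1 ≤ n ∧ 1 < A n := by
    filter_upwards [Filter.eventually_ge_atTop 1, hApos] with n h1 h2
    exact ⟨h1, h2⟩
  constructor
  · filter_upwards [hev] with n ⟨h1, h2⟩
    rw [hZre n (by omega)]
    have : (0:ℝ) < A n := by linarith
    positivity
  · rw [hlogM]
    have hinv : Filter.Tendsto (fun n : ℕ => 1 / (n:ℝ)^2) Filter.atTop (nhds 0) := by
      have h1 := tendsto_one_div_atTop_nhds_zero_nat (𝕜 := ℝ)
      have := h1.mul h1
      rw [mul_zero] at this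
      apply this.congr
      intro n
      ring
    have hlogA : Filter.Tendsto (fun n => Real.log (A n)) Filter.atTop (nhds (Real.log 2)) :=
      ((Real.continuousAt_log (by norm_num)).tendsto).comp hA
    have hmain : Filter.Tendsto
        (fun n : ℕ => I + (1 / (n:ℝ)^2) * (Real.log (1/2) + Real.log (A n)))
        Filter.atTop (nhds I) := by
      have h0 : Filter.Tendsto
          (fun n : ℕ => (1 / (n:ℝ)^2) * (Real.log (1/2) + Real.log (A n)))
          Filter.atTop (nhds 0) := by
        have := hinv.mul (Filter.Tendsto.add
          (tendsto_const_nhds (x := Real.log (1/2)) (f := Filter.atTop)) hlogA)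
        simpa using this
      have := (tendsto_const_nhds (x := I) (f := (Filter.atTop : Filter ℕ))).add h0
      simpa using this
    apply hmain.congr'
    filter_upwards [hev] with n ⟨h1, h2⟩
    have hn : n ≠ 0 := by omega
    have hnR : (0:ℝ) < n := by positivity
    have hA0 : (0:ℝ) < A n := by linarith
    rw [hZre n hn]
    rw [show (1/2 : ℝ) * Real.exp ((n:ℝ)^2 * I) * A n
        = (1/2 : ℝ) * (Real.exp ((n:ℝ)^2 * I) * A n) from by ring]
    rw [Real.log_mul (by norm_num) (by positivity),
      Real.log_mul (Real.exp_ne_zero _) (ne_of_gt hA0), Real.log_exp]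
    field_simp
    ring

end ZA

/-- for a Laurent polynomial `P` with real coefficients, positive on
the torus, `Z(n)` is eventually positive and `(1/n²) log Z(n) → m(P)`. -/
theorem Ztot_growth (P : ℂ → ℂ → ℂ) (hP : IsRealLaurentPoly P)
    (hpos : ∀ x y : ℂ, ‖x‖ = 1 → ‖y‖ = 1 →
      0 < (P x y).re ∧ (P x y).im = 0) :
    (∀ᶠ n : ℕ in Filter.atTop, 0 < (Ztot P n).re) ∧
      Filter.Tendsto (fun n : ℕ => (1 / (n : ℝ) ^ 2) * Real.log ((Ztot P n).re))
        Filter.atTop (nhds (logMahler P)) :=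
  ZA.Ztot_growth' P hP hpos
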